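/- arXiv:2209.00950 — 4 statements merged into one kernel-verified Lean document; each statement's English description precedes it below -/
import Mathlib

section
/- Let X be a Poisson random variable with parameter θ > 0. For any 0 ≤ x ≤ θ, P(X ≤ θ - x) ≤ exp(-x²/(2θ)). -/
open ProbabilityTheory Real
open scoped NNReal ENNReal

lemma poisson_mgf_sum (θ : ℝ≥0) (c : ℝ) :
    HasSum (fun n : ℕ ↦ c ^ n * poissonPMFReal θ n) (Real.exp ((θ : ℝ) * c - θ)) := by
  unfold poissonPMFReal
  have h : (fun n : ℕ ↦ c ^ n * (rexp (-θ) * θ ^ n / n.factorial)) =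
      fun n : ℕ ↦ rexp (-θ) * (((θ : ℝ) * c) ^ n / n.factorial) := by
    ext n; rw [mul_pow]; ring
  rw [h]
  have := (NormedSpace.expSeries_div_hasSum_exp ((θ : ℝ) * c)).mul_left (rexp (-θ))
  rw [← Real.exp_eq_exp_ℝ, ← Real.exp_add] at this
  rw [show (θ : ℝ) * c - θ = -θ + θ * c by ring]
  exact this

lemma key_ineq (u : ℝ) (h0 : 0 ≤ u) (h1 : u < 1) :
    0 ≤ u - u ^ 2 / 2 + (1 - u) * Real.log (1 - u) := by
  set f : ℝ → ℝ := fun u ↦ u - u ^ 2 / 2 + (1 - u) * Real.log (1 - u) with hf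
  have hderiv : ∀ y ∈ Set.Ico (0:ℝ) 1, HasDerivAt f (-y - Real.log (1 - y)) y := by
    intro y hy
    have hpos : 0 < 1 - y := by linarith [hy.2]
    have h1 : HasDerivAt (fun u : ℝ ↦ 1 - u) (-1) y := by
      simpa using (hasDerivAt_id y).const_sub 1
    have hlog : HasDerivAt (fun u : ℝ ↦ Real.log (1 - u)) (-1 / (1 - y)) y :=
      h1.log hpos.ne'
    have hmul : HasDerivAt (fun u : ℝ ↦ (1 - u) * Real.log (1 - u))
        ((-1) * Real.log (1 - y) + (1 - y) * (-1 / (1 - y))) y := h1.mul hlog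
    have hpoly : HasDerivAt (fun u : ℝ ↦ u - u ^ 2 / 2) (1 - 2 * y / 2) y := by
      exact ((hasDerivAt_id' y).sub ((hasDerivAt_pow 2 y).div_const 2)).congr_deriv (by norm_num)
    have := hpoly.add hmul
    refine this.congr_deriv ?_
    field_simp [hpos.ne']
    ring
  have hmono : MonotoneOn f (Set.Ico (0:ℝ) 1) := by
    apply monotoneOn_of_deriv_nonneg (convex_Ico 0 1)
    · exact fun y hy ↦ (hderiv y hy).continuousAt.continuousWithinAt
    · intro y hy
      rw [interior_Ico] at hy
      exact (hderiv y (Set.mem_Ico_of_Ioo hy)).differentiableAt.differentiableWithinAt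
    · intro y hy
      rw [interior_Ico] at hy
      rw [(hderiv y (Set.mem_Ico_of_Ioo hy)).deriv]
      have hpos : 0 < 1 - y := by linarith [hy.2]
      have := Real.log_le_sub_one_of_pos hpos
      linarith
  have h0' : f 0 = 0 := by simp [hf]
  have := hmono (Set.mem_Ico.mpr ⟨le_refl 0, one_pos⟩) (Set.mem_Ico.mpr ⟨h0, h1⟩) h0
  rw [h0'] at this
  exact this

lemma poisson_chernoff (θ : ℝ≥0) (x t : ℝ) (ht : 0 ≤ t) :
    poissonMeasure θ {n : ℕ | (n : ℝ) ≤ (θ : ℝ) - x} ≤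
      ENNReal.ofReal (Real.exp (t * ((θ : ℝ) - x) + (θ : ℝ) * Real.exp (-t) - θ)) := by
  set S : Set ℕ := {n : ℕ | (n : ℝ) ≤ (θ : ℝ) - x} with hS
  have hsum : HasSum (fun n : ℕ ↦ Real.exp (t * ((θ : ℝ) - x)) *
      (Real.exp (-t) ^ n * poissonPMFReal θ n))
      (Real.exp (t * ((θ : ℝ) - x)) * Real.exp ((θ : ℝ) * Real.exp (-t) - θ)) :=
    (poisson_mgf_sum θ (Real.exp (-t))).mul_left _
  have hmeas : MeasurableSet S := trivial
  have hpm : poissonMeasure θ S = ∑' n : ℕ, S.indicator (⇑(poissonPMF θ)) n := by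
    rw [poissonMeasure, MeasureTheory.Measure.sum_apply _ hmeas]
    congr 1; ext n
    rw [MeasureTheory.Measure.smul_apply, MeasureTheory.Measure.dirac_apply' _ hmeas, smul_eq_mul]
    by_cases hn : n ∈ S
    · simp [hn]; rfl
    · simp [hn]
  rw [hpm]
  have hbound : ∀ n : ℕ, S.indicator (⇑(poissonPMF θ)) n ≤
      ENNReal.ofReal (Real.exp (t * ((θ : ℝ) - x)) *
        (Real.exp (-t) ^ n * poissonPMFReal θ n)) := by
    intro n
    by_cases hn : n ∈ S
    · rw [Set.indicator_of_mem hn]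
      have hpmf : (poissonPMF θ) n = ENNReal.ofReal (poissonPMFReal θ n) := rfl
      rw [hpmf]
      apply ENNReal.ofReal_le_ofReal
      have h1 : Real.exp (-t) ^ n = Real.exp (-(t * n)) := by
        rw [← Real.exp_nat_mul]; ring_nf
      rw [h1, ← mul_assoc, ← Real.exp_add]
      have hexp : (1 : ℝ) ≤ Real.exp (t * ((θ : ℝ) - x) + -(t * n)) := by
        rw [← Real.exp_zero]
        apply Real.exp_le_exp.mpr
        have : (n : ℝ) ≤ (θ : ℝ) - x := hn
        nlinarith
      nlinarith [poissonPMFReal_nonneg (r := θ) (n := n), hexp]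
    · rw [Set.indicator_of_notMem hn]
      exact zero_le
  calc ∑' n : ℕ, S.indicator (⇑(poissonPMF θ)) n
      ≤ ∑' n : ℕ, ENNReal.ofReal (Real.exp (t * ((θ : ℝ) - x)) *
          (Real.exp (-t) ^ n * poissonPMFReal θ n)) := ENNReal.tsum_le_tsum hbound
    _ = ENNReal.ofReal (Real.exp (t * ((θ : ℝ) - x)) * Real.exp ((θ : ℝ) * Real.exp (-t) - θ)) := by
        rw [← ENNReal.ofReal_tsum_of_nonneg (fun n ↦ mul_nonneg (Real.exp_pos _).le
          (mul_nonneg (pow_nonneg (Real.exp_pos _).le n) poissonPMFReal_nonneg)) hsum.summable,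
          hsum.tsum_eq]
    _ = ENNReal.ofReal (Real.exp (t * ((θ : ℝ) - x) + (θ : ℝ) * Real.exp (-t) - θ)) := by
        rw [← Real.exp_add]; ring_nf

/-- Lower tail bound for a Poisson random variable with parameter `θ > 0`:
for `0 ≤ x ≤ θ`, `P(X ≤ θ - x) ≤ exp(-x²/(2θ))`. -/
theorem poisson_lower_tail (θ : ℝ≥0) (hθ : 0 < θ) (x : ℝ) (hx0 : 0 ≤ x) (hxθ : x ≤ θ) :
    poissonMeasure θ {n : ℕ | (n : ℝ) ≤ (θ : ℝ) - x} ≤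
      ENNReal.ofReal (Real.exp (-x ^ 2 / (2 * (θ : ℝ)))) := by
  have hθ' : (0 : ℝ) < θ := hθ
  rcases eq_or_lt_of_le hxθ with heq | hlt
  · -- x = θ : take t = log 2
    refine (poisson_chernoff θ x (Real.log 2) (Real.log_nonneg one_le_two)).trans ?_
    apply ENNReal.ofReal_le_ofReal
    apply Real.exp_le_exp.mpr
    have h2 : Real.exp (-Real.log 2) = 1 / 2 := by
      rw [Real.exp_neg, Real.exp_log two_pos]; norm_num
    rw [← heq, h2]
    have hxpos : 0 < x := by rw [heq]; exact hθ'
    have hh : -x ^ 2 / (2 * x) = -x / 2 := by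
      rw [div_eq_div_iff (by nlinarith) two_ne_zero]; ring
    rw [hh]
    nlinarith
  · -- x < θ : take t = log (θ / (θ - x))
    set t : ℝ := Real.log ((θ : ℝ) / ((θ : ℝ) - x)) with hT
    have hsub : (0 : ℝ) < (θ : ℝ) - x := by linarith
    have hratio : (1 : ℝ) ≤ (θ : ℝ) / ((θ : ℝ) - x) := by
      rw [le_div_iff₀ hsub]; linarith
    have ht : 0 ≤ t := Real.log_nonneg hratio
    refine (poisson_chernoff θ x t ht).trans ?_
    apply ENNReal.ofReal_le_ofReal
    apply Real.exp_le_exp.mpr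
    have hexp : Real.exp (-t) = ((θ : ℝ) - x) / θ := by
      rw [Real.exp_neg, Real.exp_log (by positivity), inv_div]
    have hlog : t = -Real.log (1 - x / θ) := by
      rw [hT, ← Real.log_inv]
      congr 1
      field_simp
    have hkey := key_ineq (x / θ) (by positivity) (by rw [div_lt_one hθ']; exact hlt)
    have hlog1 : Real.log (1 - x / θ) = Real.log (((θ : ℝ) - x) / θ) := by
      congr 1; field_simp
    rw [hexp, hlog, hlog1]
    rw [hlog1] at hkey
    have hmul : (θ : ℝ) * (((θ : ℝ) - x) / θ) = (θ : ℝ) - x := by field_simp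
    rw [hmul]
    set L : ℝ := Real.log (((θ : ℝ) - x) / θ) with hL
    have h2 : 0 ≤ x - x ^ 2 / (2 * (θ : ℝ)) + ((θ : ℝ) - x) * L := by
      have h3 : x - x ^ 2 / (2 * (θ : ℝ)) + ((θ : ℝ) - x) * L =
          (θ : ℝ) * (x / θ - (x / θ) ^ 2 / 2 + (1 - x / θ) * L) := by
        field_simp
      rw [h3]
      exact mul_nonneg hθ'.le hkey
    have hneg : -x ^ 2 / (2 * (θ : ℝ)) = -(x ^ 2 / (2 * (θ : ℝ))) := by ring
    rw [hneg]
    linarith [h2]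
end

section
/- Let A, B be independent random variables uniformly distributed on [0,λ) with λ > 0, and let s₁, s₂ ∈ [0,λ). Then the probability that both s₁ and s₂ belong to the circular arc ⟦A,B⟦ equals λ⁻²(λ²/2 - |s₂-s₁|(λ - |s₂-s₁|)). -/
open MeasureTheory ProbabilityTheory

/-- Membership in the circular arc `⟦a,b⟦` of the circle `[0,λ)`: it is `[a,b)` when
`a ≤ b`, and the complement of `[b,a)` otherwise (points taken in `[0,λ)`). -/
def memArc (a b s : ℝ) : Prop := if a ≤ b then a ≤ s ∧ s < b else ¬(b ≤ s ∧ s < a)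

lemma memArc_iff (a b s : ℝ) :
    memArc a b s ↔ ((a ≤ s ∧ (b < a ∨ s < b)) ∨ (s < a ∧ s < b ∧ b < a)) := by
  unfold memArc
  split_ifs with hab
  · constructor
    · rintro ⟨h1, h2⟩
      exact Or.inl ⟨h1, Or.inr h2⟩
    · rintro (⟨h1, h2 | h2⟩ | ⟨h1, h2, h3⟩)
      · exact absurd hab (not_le.mpr h2)
      · exact ⟨h1, h2⟩
      · linarith
  · push_neg at hab
    constructor
    · intro h
      rcases le_or_gt a s with h1 | h1
      · exact Or.inl ⟨h1, Or.inl hab⟩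
      · rcases le_or_gt b s with h2 | h2
        · exact absurd ⟨h2, h1⟩ h
        · exact Or.inr ⟨h1, h2, hab⟩
    · rintro (⟨h1, _⟩ | ⟨h1, h2, _⟩) ⟨hb, hs⟩ <;> linarith

lemma slice1 {l s₁ s₂ a : ℝ} (h0 : 0 ≤ s₁) (h2 : a ≤ s₁) (h3 : s₁ ≤ s₂) (h4 : s₂ < l) :
    {b | memArc a b s₁ ∧ memArc a b s₂} ∩ Set.Ico 0 l = Set.Ico 0 a ∪ Set.Ioo s₂ l := by
  ext b
  simp only [Set.mem_inter_iff, Set.mem_setOf_eq, Set.mem_Ico, Set.mem_union, Set.mem_Ioo,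
    memArc_iff]
  constructor
  · rintro ⟨⟨c1, c2⟩, hb0, hbl⟩
    have d2 : b < a ∨ s₂ < b := by
      rcases c2 with ⟨_, h⟩ | ⟨h, _, _⟩
      · exact h
      · linarith
    rcases d2 with h | h
    · exact Or.inl ⟨hb0, h⟩
    · exact Or.inr ⟨h, hbl⟩
  · rintro (⟨hb0, hba⟩ | ⟨hbs, hbl⟩)
    · exact ⟨⟨Or.inl ⟨h2, Or.inl hba⟩, Or.inl ⟨by linarith, Or.inl hba⟩⟩, hb0, by linarith⟩
    · exact ⟨⟨Or.inl ⟨h2, Or.inr (by linarith)⟩, Or.inl ⟨by linarith, Or.inr hbs⟩⟩,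
        by linarith, hbl⟩

lemma slice2 {l s₁ s₂ a : ℝ} (hs₁ : 0 ≤ s₁) (h2 : s₁ < a) (h3 : a ≤ s₂) (h4 : s₂ < l) :
    {b | memArc a b s₁ ∧ memArc a b s₂} ∩ Set.Ico 0 l = Set.Ioo s₁ a := by
  ext b
  simp only [Set.mem_inter_iff, Set.mem_setOf_eq, Set.mem_Ico, Set.mem_Ioo, memArc_iff]
  constructor
  · rintro ⟨⟨⟨ha1, _⟩ | ⟨_, hb1, hb2⟩, _⟩, _, _⟩
    · linarith
    · exact ⟨hb1, hb2⟩
  · rintro ⟨hb1, hb2⟩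
    refine ⟨⟨Or.inr ⟨h2, hb1, hb2⟩, Or.inl ⟨h3, Or.inl (by linarith)⟩⟩, by linarith, by linarith⟩

lemma slice3 {l s₁ s₂ a : ℝ} (hs₁ : 0 ≤ s₁) (h3 : s₁ ≤ s₂) (h2 : s₂ < a) (h4 : a ≤ l) :
    {b | memArc a b s₁ ∧ memArc a b s₂} ∩ Set.Ico 0 l = Set.Ioo s₂ a := by
  ext b
  simp only [Set.mem_inter_iff, Set.mem_setOf_eq, Set.mem_Ico, Set.mem_Ioo, memArc_iff]
  constructor
  · rintro ⟨⟨_, ⟨ha2, _⟩ | ⟨_, hb1, hb2⟩⟩, _, _⟩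
    · linarith
    · exact ⟨hb1, hb2⟩
  · rintro ⟨hb1, hb2⟩
    exact ⟨⟨Or.inr ⟨by linarith, by linarith, hb2⟩, Or.inr ⟨h2, hb1, hb2⟩⟩, by linarith,
      by linarith⟩

lemma measurableSet_memArc (s : ℝ) :
    MeasurableSet {p : ℝ × ℝ | memArc p.1 p.2 s} := by
  have h : {p : ℝ × ℝ | memArc p.1 p.2 s} =
      ({p : ℝ × ℝ | p.1 ≤ s} ∩ ({p : ℝ × ℝ | p.2 < p.1} ∪ {p : ℝ × ℝ | s < p.2})) ∪
      ({p : ℝ × ℝ | s < p.1} ∩ ({p : ℝ × ℝ | s < p.2} ∩ {p : ℝ × ℝ | p.2 < p.1})) := by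
    ext p
    simp only [Set.mem_union, Set.mem_inter_iff, Set.mem_setOf_eq, memArc_iff]
  rw [h]
  have m1 : MeasurableSet {p : ℝ × ℝ | p.1 ≤ s} :=
    measurableSet_le measurable_fst measurable_const
  have m2 : MeasurableSet {p : ℝ × ℝ | p.2 < p.1} :=
    measurableSet_lt measurable_snd measurable_fst
  have m3 : MeasurableSet {p : ℝ × ℝ | s < p.2} :=
    measurableSet_lt measurable_const measurable_snd
  have m4 : MeasurableSet {p : ℝ × ℝ | s < p.1} :=
    measurableSet_lt measurable_const measurable_fst
  exact (m1.inter (m2.union m3)).union (m4.inter (m3.inter m2))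

lemma int_linear (c p q : ℝ) (hpq : p ≤ q) (hpos : ∀ x ∈ Set.Ioc p q, 0 ≤ x + c) :
    ∫⁻ a in Set.Ioc p q, ENNReal.ofReal (a + c) =
      ENNReal.ofReal ((q ^ 2 - p ^ 2) / 2 + c * (q - p)) := by
  have hcont : Continuous fun x : ℝ => x + c := by continuity
  have hint : Integrable (fun a : ℝ => a + c) (volume.restrict (Set.Ioc p q)) :=
    hcont.integrableOn_Ioc
  have hnn : 0 ≤ᶠ[ae (volume.restrict (Set.Ioc p q))] fun a : ℝ => a + c := by
    filter_upwards [ae_restrict_mem measurableSet_Ioc] with x hx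
    exact hpos x hx
  rw [← ofReal_integral_eq_lintegral_ofReal hint hnn]
  congr 1
  rw [← intervalIntegral.integral_of_le hpq,
    intervalIntegral.integral_add intervalIntegral.intervalIntegrable_id intervalIntegrable_const,
    integral_id, intervalIntegral.integral_const, smul_eq_mul]
  ring

lemma key_lintegral (l s₁ s₂ : ℝ) (hl : 0 < l) (hs₁ : s₁ ∈ Set.Ico 0 l)
    (hs₂ : s₂ ∈ Set.Ico 0 l) (h12 : s₁ ≤ s₂) :
    ∫⁻ a in Set.Ico 0 l, volume ({b | memArc a b s₁ ∧ memArc a b s₂} ∩ Set.Ico 0 l) =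
      ENNReal.ofReal (l ^ 2 / 2 - (s₂ - s₁) * (l - (s₂ - s₁))) := by
  obtain ⟨h10, h1l⟩ := hs₁
  obtain ⟨h20, h2l⟩ := hs₂
  rw [restrict_Ico_eq_restrict_Ioc,
    ← Set.Ioc_union_Ioc_eq_Ioc (le_trans h10 h12) (le_of_lt h2l),
    ← Set.Ioc_union_Ioc_eq_Ioc h10 h12,
    lintegral_union measurableSet_Ioc (by
      rw [Set.disjoint_union_left]
      exact ⟨(Set.Ioc_disjoint_Ioc_of_le le_rfl).mono_left (Set.Ioc_subset_Ioc_right h12),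
        Set.Ioc_disjoint_Ioc_of_le le_rfl⟩),
    lintegral_union measurableSet_Ioc (Set.Ioc_disjoint_Ioc_of_le le_rfl)]
  have e1 : ∫⁻ a in Set.Ioc 0 s₁, volume ({b | memArc a b s₁ ∧ memArc a b s₂} ∩ Set.Ico 0 l) =
      ENNReal.ofReal ((s₁ ^ 2 - 0 ^ 2) / 2 + (l - s₂) * (s₁ - 0)) := by
    rw [setLIntegral_congr_fun_ae measurableSet_Ioc
      (ae_of_all _ (fun a ha => show _ = ENNReal.ofReal (a + (l - s₂)) by
        rw [slice1 h10 ha.2 h12 h2l, measure_union (by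
            apply Set.disjoint_left.mpr
            rintro b ⟨_, hb⟩ ⟨hb', _⟩
            linarith [ha.2]) measurableSet_Ioo,
          Real.volume_Ico, Real.volume_Ioo, sub_zero,
          ← ENNReal.ofReal_add (le_of_lt ha.1) (by linarith)]))]
    exact int_linear (l - s₂) 0 s₁ h10 (fun x hx => by linarith [hx.1])
  have e2 : ∫⁻ a in Set.Ioc s₁ s₂, volume ({b | memArc a b s₁ ∧ memArc a b s₂} ∩ Set.Ico 0 l) =
      ENNReal.ofReal ((s₂ ^ 2 - s₁ ^ 2) / 2 + (-s₁) * (s₂ - s₁)) := by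
    rw [setLIntegral_congr_fun_ae measurableSet_Ioc
      (ae_of_all _ (fun a ha => show _ = ENNReal.ofReal (a + (-s₁)) by
        rw [slice2 h10 ha.1 ha.2 h2l, Real.volume_Ioo, sub_eq_add_neg]))]
    exact int_linear (-s₁) s₁ s₂ h12 (fun x hx => by linarith [hx.1])
  have e3 : ∫⁻ a in Set.Ioc s₂ l, volume ({b | memArc a b s₁ ∧ memArc a b s₂} ∩ Set.Ico 0 l) =
      ENNReal.ofReal ((l ^ 2 - s₂ ^ 2) / 2 + (-s₂) * (l - s₂)) := by
    rw [setLIntegral_congr_fun_ae measurableSet_Ioc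
      (ae_of_all _ (fun a ha => show _ = ENNReal.ofReal (a + (-s₂)) by
        rw [slice3 h10 h12 ha.1 ha.2, Real.volume_Ioo, sub_eq_add_neg]))]
    exact int_linear (-s₂) s₂ l (le_of_lt h2l) (fun x hx => by linarith [hx.1])
  rw [e1, e2, e3, ← ENNReal.ofReal_add (by nlinarith) (by nlinarith),
    ← ENNReal.ofReal_add (by nlinarith) (by nlinarith)]
  congr 1
  ring

theorem prob_arc_aux
    {Ω : Type*} [MeasurableSpace Ω] (P : Measure Ω) [IsProbabilityMeasure P]
    (l : ℝ) (hl : 0 < l) (A B : Ω → ℝ) (hA : Measurable A) (hB : Measurable B)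
    (hindep : IndepFun A B P)
    (hunifA : Measure.map A P = (ENNReal.ofReal l)⁻¹ • volume.restrict (Set.Ico 0 l))
    (hunifB : Measure.map B P = (ENNReal.ofReal l)⁻¹ • volume.restrict (Set.Ico 0 l))
    (s₁ s₂ : ℝ) (hs₁ : s₁ ∈ Set.Ico 0 l) (hs₂ : s₂ ∈ Set.Ico 0 l) (h12 : s₁ ≤ s₂) :
    P {ω | memArc (A ω) (B ω) s₁ ∧ memArc (A ω) (B ω) s₂} =
      ENNReal.ofReal (l⁻¹ ^ 2 * (l ^ 2 / 2 - |s₂ - s₁| * (l - |s₂ - s₁|))) := by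
  have hSmeas : MeasurableSet {p : ℝ × ℝ | memArc p.1 p.2 s₁ ∧ memArc p.1 p.2 s₂} :=
    (measurableSet_memArc s₁).inter (measurableSet_memArc s₂)
  have hAB : Measure.map (fun ω => (A ω, B ω)) P =
      (Measure.map A P).prod (Measure.map B P) :=
    (indepFun_iff_map_prod_eq_prod_map_map hA.aemeasurable hB.aemeasurable).mp hindep
  have hc_ne_top : (ENNReal.ofReal l)⁻¹ ≠ ⊤ :=
    ENNReal.inv_ne_top.mpr (by simp [ENNReal.ofReal_eq_zero]; linarith)
  have step1 : P {ω | memArc (A ω) (B ω) s₁ ∧ memArc (A ω) (B ω) s₂} =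
      Measure.map (fun ω => (A ω, B ω)) P
        {p : ℝ × ℝ | memArc p.1 p.2 s₁ ∧ memArc p.1 p.2 s₂} := by
    rw [Measure.map_apply (hA.prodMk hB) hSmeas]
    rfl
  rw [step1, hAB, hunifA, hunifB, Measure.prod_apply hSmeas]
  simp only [lintegral_smul_measure, Measure.smul_apply, smul_eq_mul]
  rw [lintegral_const_mul' _ _ hc_ne_top]
  have slice_eq : ∀ a : ℝ, (volume.restrict (Set.Ico 0 l))
      (Prod.mk a ⁻¹' {p : ℝ × ℝ | memArc p.1 p.2 s₁ ∧ memArc p.1 p.2 s₂}) =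
      volume ({b | memArc a b s₁ ∧ memArc a b s₂} ∩ Set.Ico 0 l) := fun a => by
    rw [Measure.restrict_apply' measurableSet_Ico]
    rfl
  simp only [slice_eq]
  rw [key_lintegral l s₁ s₂ hl hs₁ hs₂ h12]
  rw [← ENNReal.ofReal_inv_of_pos hl, ← ENNReal.ofReal_mul (by positivity),
    ← ENNReal.ofReal_mul (by positivity)]
  congr 1
  rw [abs_of_nonneg (by linarith)]
  ring

/-- If `A, B` are independent and uniformly distributed on `[0,λ)`, then for
`s₁, s₂ ∈ [0,λ)`, the probability that both belong to the arc `⟦A,B⟦` equals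
`λ⁻²(λ²/2 - |s₂-s₁|(λ-|s₂-s₁|))`. -/
theorem prob_arc_contains_two_points
    {Ω : Type*} [MeasurableSpace Ω] (P : Measure Ω) [IsProbabilityMeasure P]
    (l : ℝ) (hl : 0 < l) (A B : Ω → ℝ) (hA : Measurable A) (hB : Measurable B)
    (hindep : IndepFun A B P)
    (hunifA : Measure.map A P = (ENNReal.ofReal l)⁻¹ • volume.restrict (Set.Ico 0 l))
    (hunifB : Measure.map B P = (ENNReal.ofReal l)⁻¹ • volume.restrict (Set.Ico 0 l))
    (s₁ s₂ : ℝ) (hs₁ : s₁ ∈ Set.Ico 0 l) (hs₂ : s₂ ∈ Set.Ico 0 l) :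
    P {ω | memArc (A ω) (B ω) s₁ ∧ memArc (A ω) (B ω) s₂} =
      ENNReal.ofReal (l⁻¹ ^ 2 * (l ^ 2 / 2 - |s₂ - s₁| * (l - |s₂ - s₁|))) := by
  rcases le_total s₁ s₂ with h | h
  · exact prob_arc_aux P l hl A B hA hB hindep hunifA hunifB s₁ s₂ hs₁ hs₂ h
  · have hset : {ω | memArc (A ω) (B ω) s₁ ∧ memArc (A ω) (B ω) s₂} =
        {ω | memArc (A ω) (B ω) s₂ ∧ memArc (A ω) (B ω) s₁} := by
      ext ω
      exact and_comm
    rw [hset, abs_sub_comm s₂ s₁]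
    exact prob_arc_aux P l hl A B hA hB hindep hunifA hunifB s₂ s₁ hs₂ hs₁ h
end

section
/- Let n ≥ 1 and for each i ∈ {1,...,n} let a_i, b_i ∈ [0,1) define arcs ⟦a_i,b_i⟦ on the circle. For ρ ∈ (0,1/2], set L = ⌊1/(2ρ)⌋ and let ρ_k, for k = -L+1,...,L, be the points of [0,1) with arguments kρ (mod 1). Define for any two points s,t the quantity Δ_{s,t} = max(|I_s∖I_t|, |I_t∖I_s|) where I_s = {i : s ∈ ⟦a_i,b_i⟦}. Then Σ_{k=-L+1}^{L} Δ_{ρ_k,ρ_{k-1}} ≤ 2n, and consequently min_k Δ_{ρ_k,ρ_{k-1}} ≤ ⌊n/⌊(2ρ)⁻¹⌋⌋. -/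
open scoped BigOperators Classical

/-- The set of neurons activated at stimulus `s` for the place cells code with
arcs `⟦a i, b i⟦`. -/
noncomputable def actSet {n : ℕ} (a b : Fin n → ℝ) (s : ℝ) : Finset (Fin n) :=
  Finset.univ.filter (fun i => memArc (a i) (b i) s)

/-- `Δ_{s,t} = max(|I_s∖I_t|, |I_t∖I_s|)`. -/
noncomputable def Δ {n : ℕ} (a b : Fin n → ℝ) (s t : ℝ) : ℕ :=
  max ((actSet a b s \ actSet a b t).card) ((actSet a b t \ actSet a b s).card)

lemma cross_a {a b s t : ℝ} (h1 : memArc a b s) (h2 : ¬ memArc a b t) :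
    (t < a ∧ a ≤ s) ∨ (s ≤ t ∧ (t < a ∨ a ≤ s)) := by
  unfold memArc at h1 h2
  split_ifs at h1 h2 with hab
  · push_neg at h2
    by_cases hta : t < a
    · exact Or.inl ⟨hta, h1.1⟩
    · have hbt := h2 (le_of_not_gt hta)
      exact Or.inr ⟨by linarith [h1.2], Or.inr h1.1⟩
  · push_neg at h1
    rw [not_not] at h2
    by_cases hbs : b ≤ s
    · exact Or.inl ⟨h2.2, h1 hbs⟩
    · exact Or.inr ⟨by linarith [h2.1, lt_of_not_ge hbs], Or.inl h2.2⟩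

lemma cross_b {a b s t : ℝ} (h1 : memArc a b t) (h2 : ¬ memArc a b s) :
    (t < b ∧ b ≤ s) ∨ (s ≤ t ∧ (t < b ∨ b ≤ s)) := by
  unfold memArc at h1 h2
  split_ifs at h1 h2 with hab
  · push_neg at h2
    by_cases has : a ≤ s
    · exact Or.inl ⟨h1.2, h2 has⟩
    · exact Or.inr ⟨by linarith [h1.1, lt_of_not_ge has], Or.inl h1.2⟩
  · push_neg at h1
    rw [not_not] at h2
    by_cases hbt : b ≤ t
    · exact Or.inr ⟨by linarith [h1 hbt, h2.2], Or.inr h2.1⟩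
    · exact Or.inl ⟨lt_of_not_ge hbt, h2.1⟩

lemma lift_cond {ρ : ℝ} (hρ0 : 0 < ρ) (hρ : ρ ≤ 1/2) (k : ℤ) {x : ℝ}
    (hx0 : 0 ≤ x) (hx1 : x < 1)
    (h : (Int.fract (((k:ℝ)-1)*ρ) < x ∧ x ≤ Int.fract ((k:ℝ)*ρ)) ∨
         (Int.fract ((k:ℝ)*ρ) ≤ Int.fract (((k:ℝ)-1)*ρ) ∧
          (Int.fract (((k:ℝ)-1)*ρ) < x ∨ x ≤ Int.fract ((k:ℝ)*ρ)))) :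
    ∃ m : ℤ, ((k:ℝ)-1)*ρ < x + m ∧ x + m ≤ (k:ℝ)*ρ := by
  set t := Int.fract (((k:ℝ)-1)*ρ) with hts
  set M := ⌊((k:ℝ)-1)*ρ⌋ with hMs
  have htM : ((k:ℝ)-1)*ρ = t + M := by
    rw [hts, hMs, Int.fract]; ring
  have ht0 : 0 ≤ t := Int.fract_nonneg _
  have ht1 : t < 1 := Int.fract_lt_one _
  have hk : (k:ℝ)*ρ = (t + ρ) + M := by linarith [htM]
  have hs : Int.fract ((k:ℝ)*ρ) = Int.fract (t + ρ) := by
    rw [hk]; exact_mod_cast Int.fract_add_intCast (t + ρ) M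
  by_cases hw : t + ρ < 1
  · have hs' : Int.fract ((k:ℝ)*ρ) = t + ρ := by
      rw [hs, Int.fract_eq_self.2 ⟨by linarith, hw⟩]
    rcases h with ⟨h1, h2⟩ | ⟨h1, h2⟩
    · refine ⟨M, ?_, ?_⟩
      · rw [htM]; linarith
      · rw [hs'] at h2; rw [hk]; linarith
    · rw [hs'] at h1; exfalso; linarith
  · push_neg at hw
    have hs' : Int.fract ((k:ℝ)*ρ) = t + ρ - 1 := by
      rw [hs, ← Int.fract_sub_intCast (t + ρ) 1,
        Int.fract_eq_self.2 ⟨by push_cast; linarith, by push_cast; linarith⟩]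
      push_cast; ring
    rcases h with ⟨h1, h2⟩ | ⟨h1, h2⟩
    · rw [hs'] at h2; exfalso; linarith
    · rcases h2 with h2 | h2
      · exact ⟨M, by rw [htM, hk]; constructor <;> linarith⟩
      · refine ⟨M + 1, ?_, ?_⟩
        · rw [htM]; push_cast; linarith
        · rw [hs'] at h2; rw [hk]; push_cast; linarith

lemma cond_lt_absurd {ρ : ℝ} (hρ0 : 0 < ρ) {L k k' m m' : ℤ} {x : ℝ}
    (hLρ : (L:ℝ)*ρ ≤ 1/2) (hk1 : -L+1 ≤ k) (hk2 : k' ≤ L) (hkk : k < k')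
    (h1 : ((k:ℝ)-1)*ρ < x+m) (h2 : x+m ≤ (k:ℝ)*ρ)
    (h1' : ((k':ℝ)-1)*ρ < x+m') (h2' : x+m' ≤ (k':ℝ)*ρ) : False := by
  have c1 : (k:ℝ) ≤ (k':ℝ)-1 := by
    have : (k:ℤ) + 1 ≤ k' := hkk
    have : ((k:ℝ)+1) ≤ (k':ℝ) := by exact_mod_cast this
    linarith
  have hkr : (k:ℝ)*ρ ≤ ((k':ℝ)-1)*ρ := mul_le_mul_of_nonneg_right c1 hρ0.le
  have hm : (m:ℝ) < m' := by linarith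
  have hm2 : (m:ℝ) + 1 ≤ m' := by
    have : m + 1 ≤ m' := Int.add_one_le_iff.2 (by exact_mod_cast hm)
    exact_mod_cast this
  have c2 : (-(L:ℝ)) ≤ (k:ℝ)-1 := by
    have : (-L : ℤ) ≤ k - 1 := by omega
    have : ((-L:ℤ):ℝ) ≤ ((k-1:ℤ):ℝ) := by exact_mod_cast this
    push_cast at this; linarith
  have b1 : (-(L:ℝ))*ρ ≤ ((k:ℝ)-1)*ρ := mul_le_mul_of_nonneg_right c2 hρ0.le
  have c3 : (k':ℝ) ≤ L := by exact_mod_cast hk2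
  have b2 : (k':ℝ)*ρ ≤ (L:ℝ)*ρ := mul_le_mul_of_nonneg_right c3 hρ0.le
  have : (-(L:ℝ))*ρ = -((L:ℝ)*ρ) := by ring
  linarith

lemma count_le {n : ℕ} (ρ : ℝ) (hρ0 : 0 < ρ) (L : ℤ) (hLρ : (L:ℝ)*ρ ≤ 1/2)
    (S : ℤ → Finset (Fin n)) (e : Fin n → ℝ)
    (hS : ∀ k i, i ∈ S k → ∃ m : ℤ, ((k:ℝ)-1)*ρ < e i + m ∧ e i + m ≤ (k:ℝ)*ρ) :
    ∑ k ∈ Finset.Icc (-L+1) L, (S k).card ≤ n := by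
  classical
  set K := Finset.Icc (-L+1) L with hK
  have step1 : ∀ k, (S k).card = ∑ i : Fin n, if i ∈ S k then 1 else 0 := by
    intro k; simp [Finset.sum_ite_mem]
  calc ∑ k ∈ K, (S k).card = ∑ k ∈ K, ∑ i : Fin n, if i ∈ S k then 1 else 0 := by
        exact Finset.sum_congr rfl fun k _ => step1 k
    _ = ∑ i : Fin n, ∑ k ∈ K, if i ∈ S k then 1 else 0 := Finset.sum_comm
    _ ≤ ∑ _i : Fin n, 1 := by
        refine Finset.sum_le_sum fun i _ => ?_
        rw [← Finset.sum_filter]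
        simp only [Finset.sum_const, smul_eq_mul, mul_one]
        refine Finset.card_le_one.2 fun k hk k' hk' => ?_
        simp only [Finset.mem_filter, hK, Finset.mem_Icc] at hk hk'
        obtain ⟨m, hm1, hm2⟩ := hS k i hk.2
        obtain ⟨m', hm1', hm2'⟩ := hS k' i hk'.2
        rcases lt_trichotomy k k' with h | h | h
        · exact absurd (cond_lt_absurd hρ0 hLρ hk.1.1 hk'.1.2 h hm1 hm2 hm1' hm2') id
        · exact h
        · exact absurd (cond_lt_absurd hρ0 hLρ hk'.1.1 hk.1.2 h hm1' hm2' hm1 hm2) id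
    _ = n := by simp

/-- Summing the discrimination quantities `Δ` along the `2L` points with arguments
`kρ (mod 1)`, `k = -L+1,…,L` where `L = ⌊1/(2ρ)⌋`, gives at most `2n`; consequently
some consecutive pair satisfies `Δ ≤ ⌊n/⌊(2ρ)⁻¹⌋⌋`. -/
theorem place_cells_sum_delta_le (n : ℕ) (hn : 1 ≤ n) (a b : Fin n → ℝ)
    (ha : ∀ i, a i ∈ Set.Ico (0 : ℝ) 1) (hb : ∀ i, b i ∈ Set.Ico (0 : ℝ) 1)
    (ρ : ℝ) (hρ0 : 0 < ρ) (hρ : ρ ≤ 1 / 2) (L : ℤ) (hL : L = ⌊1 / (2 * ρ)⌋)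
    (pt : ℤ → ℝ) (hpt : ∀ k, pt k = Int.fract (k * ρ)) :
    (∑ k ∈ Finset.Icc (-L + 1) L, Δ a b (pt k) (pt (k - 1))) ≤ 2 * n ∧
    ∃ k ∈ Finset.Icc (-L + 1) L, (Δ a b (pt k) (pt (k - 1)) : ℤ) ≤ (n : ℤ) / L := by
  classical
  have hL1 : 1 ≤ L := by
    rw [hL]
    refine Int.le_floor.2 ?_
    rw [le_div_iff₀ (by linarith : (0:ℝ) < 2*ρ)]
    push_cast; linarith
  have hLρ : (L:ℝ) * ρ ≤ 1/2 := by
    have h2 : (L:ℝ) ≤ 1/(2*ρ) := by rw [hL]; exact Int.floor_le _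
    have := mul_le_mul_of_nonneg_right h2 hρ0.le
    calc (L:ℝ)*ρ ≤ (1/(2*ρ))*ρ := this
      _ = 1/2 := by field_simp
  set K := Finset.Icc (-L+1) L with hK
  set S1 : ℤ → Finset (Fin n) := fun k => actSet a b (pt k) \ actSet a b (pt (k-1)) with hS1
  set S2 : ℤ → Finset (Fin n) := fun k => actSet a b (pt (k-1)) \ actSet a b (pt k) with hS2
  have hmem : ∀ (s : ℝ) (i : Fin n), i ∈ actSet a b s ↔ memArc (a i) (b i) s := by
    intro s i; simp [actSet]
  have hptk : ∀ k : ℤ, pt k = Int.fract ((k:ℝ) * ρ) := fun k => hpt k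
  have hptk1 : ∀ k : ℤ, pt (k-1) = Int.fract (((k:ℝ)-1) * ρ) := by
    intro k; rw [hpt]; push_cast; ring_nf
  have hS1cond : ∀ (k : ℤ) (i : Fin n), i ∈ S1 k →
      ∃ m : ℤ, ((k:ℝ)-1)*ρ < a i + m ∧ a i + m ≤ (k:ℝ)*ρ := by
    intro k i hi
    rw [hS1] at hi
    simp only [Finset.mem_sdiff, hmem] at hi
    have hc := cross_a hi.1 hi.2
    rw [hpt (k-1), hpt k] at hc
    push_cast at hc
    exact lift_cond hρ0 hρ k (ha i).1 (ha i).2 hc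
  have hS2cond : ∀ (k : ℤ) (i : Fin n), i ∈ S2 k →
      ∃ m : ℤ, ((k:ℝ)-1)*ρ < b i + m ∧ b i + m ≤ (k:ℝ)*ρ := by
    intro k i hi
    rw [hS2] at hi
    simp only [Finset.mem_sdiff, hmem] at hi
    have hc := cross_b hi.1 hi.2
    rw [hpt (k-1), hpt k] at hc
    push_cast at hc
    exact lift_cond hρ0 hρ k (hb i).1 (hb i).2 hc
  have hc1 : ∑ k ∈ K, (S1 k).card ≤ n := count_le ρ hρ0 L hLρ S1 a hS1cond
  have hc2 : ∑ k ∈ K, (S2 k).card ≤ n := count_le ρ hρ0 L hLρ S2 b hS2cond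
  have hΔ : ∀ k : ℤ, Δ a b (pt k) (pt (k-1)) ≤ (S1 k).card + (S2 k).card := by
    intro k
    exact max_le (Nat.le_add_right _ _) (Nat.le_add_left _ _)
  have hsum : (∑ k ∈ K, Δ a b (pt k) (pt (k - 1))) ≤ 2 * n := by
    calc ∑ k ∈ K, Δ a b (pt k) (pt (k - 1))
        ≤ ∑ k ∈ K, ((S1 k).card + (S2 k).card) :=
          Finset.sum_le_sum fun k _ => hΔ k
      _ = (∑ k ∈ K, (S1 k).card) + ∑ k ∈ K, (S2 k).card := Finset.sum_add_distrib
      _ ≤ n + n := Nat.add_le_add hc1 hc2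
      _ = 2 * n := by ring
  refine ⟨hsum, ?_⟩
  by_contra hcon
  push_neg at hcon
  have hKcard : (K.card : ℤ) = 2 * L := by
    rw [hK, Int.card_Icc]
    rw [Int.toNat_of_nonneg (by omega)]
    ring
  have hlow : ∀ k ∈ K, (n:ℤ)/L + 1 ≤ (Δ a b (pt k) (pt (k-1)) : ℤ) := by
    intro k hk
    exact Int.add_one_le_iff.2 (hcon k hk)
  have hsum2 : (K.card : ℤ) * ((n:ℤ)/L + 1) ≤ (2 * n : ℤ) := by
    calc (K.card : ℤ) * ((n:ℤ)/L + 1) = ∑ _k ∈ K, ((n:ℤ)/L + 1) := by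
          rw [Finset.sum_const, nsmul_eq_mul]
      _ ≤ ∑ k ∈ K, (Δ a b (pt k) (pt (k-1)) : ℤ) := Finset.sum_le_sum hlow
      _ = ((∑ k ∈ K, Δ a b (pt k) (pt (k-1)) : ℕ) : ℤ) := by push_cast; rfl
      _ ≤ (2 * n : ℤ) := by exact_mod_cast hsum
  rw [hKcard] at hsum2
  have e1 := Int.mul_ediv_add_emod (n:ℤ) L
  have e2 := Int.emod_lt_of_pos (n:ℤ) (by omega : (0:ℤ) < L)
  have e3 : 0 ≤ (n:ℤ) % L := Int.emod_nonneg _ (by omega)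
  nlinarith [hsum2, e1, e2, e3]
end

section
/- For the extreme dyadic grid code on n neurons, where neuron i ∈ {1,...,n} is active at s ∈ [0,1) iff s mod 2^{-(i-1)} < 2^{-i} (equivalently iff the i-th binary digit of s is 0), the following holds: for any ρ ≥ 2^{-n} and any s₁, s₂ ∈ [0,1) with circular distance d(s₁,s₂) ≥ ρ, there exists i ∈ {1,...,n} such that neuron i is active at exactly one of s₁, s₂. -/
/-- The circular distance on `[0,1)`. -/
noncomputable def circDist (s₁ s₂ : ℝ) : ℝ := min |s₁ - s₂| (1 - |s₁ - s₂|)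

/-- `x mod u = x - ⌊x/u⌋·u ∈ [0,u)`. -/
noncomputable def rmod (x u : ℝ) : ℝ := x - ⌊x / u⌋ * u

/-- Neuron `i ∈ {1,…,n}` of the extreme dyadic grid code is active at `s` iff
`s mod 2^{-(i-1)} < 2^{-i}` (i.e. the `i`-th binary digit of `s` is `0`). -/
noncomputable def dyadicActive (i : ℕ) (s : ℝ) : Prop :=
  rmod s (1 / 2 ^ (i - 1)) < 1 / 2 ^ i

lemma active_succ (i : ℕ) (s : ℝ) :
    dyadicActive (i + 1) s ↔ Int.fract (s * 2 ^ i) < 1 / 2 := by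
  have hp : (0 : ℝ) < 2 ^ i := by positivity
  have hdv : s / (1 / 2 ^ i) = s * 2 ^ i := by field_simp
  simp only [dyadicActive, rmod, Nat.add_sub_cancel, Int.fract, pow_succ, hdv]
  rw [show s - (⌊s * 2 ^ i⌋ : ℝ) * (1 / 2 ^ i) = (s * 2 ^ i - ⌊s * 2 ^ i⌋) / 2 ^ i by
        field_simp,
      show (1 : ℝ) / (2 ^ i * 2) = (1 / 2) / 2 ^ i by field_simp,
      div_lt_div_iff_of_pos_right hp]

lemma floor_double_lt {x : ℝ} (h : Int.fract x < 1 / 2) : ⌊x * 2⌋ = 2 * ⌊x⌋ := by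
  have h0 := Int.fract_nonneg x
  have hx : x = (⌊x⌋ : ℝ) + Int.fract x := by rw [Int.floor_add_fract]
  have : x * 2 = ((2 * ⌊x⌋ : ℤ) : ℝ) + Int.fract x * 2 := by push_cast; nlinarith [hx]
  rw [this, Int.floor_intCast_add]
  have : ⌊Int.fract x * 2⌋ = 0 :=
    Int.floor_eq_zero_iff.mpr ⟨by linarith, by linarith⟩
  omega

lemma floor_double_ge {x : ℝ} (h : ¬ Int.fract x < 1 / 2) : ⌊x * 2⌋ = 2 * ⌊x⌋ + 1 := by
  push_neg at h
  have h1 := Int.fract_lt_one x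
  have hx : x = (⌊x⌋ : ℝ) + Int.fract x := by rw [Int.floor_add_fract]
  have : x * 2 = ((2 * ⌊x⌋ : ℤ) : ℝ) + Int.fract x * 2 := by push_cast; nlinarith [hx]
  rw [this, Int.floor_intCast_add]
  have : ⌊Int.fract x * 2⌋ = 1 := by
    rw [Int.floor_eq_iff]
    constructor <;> push_cast <;> linarith
  omega

/-- For the extreme dyadic code on `n` neurons: for any `ρ ≥ 2^{-n}` and any stimuli
`s₁, s₂ ∈ [0,1)` with circular distance at least `ρ`, some neuron `i ∈ {1,…,n}` is
active at exactly one of the two stimuli. -/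
theorem dyadic_code_discriminates (n : ℕ) (hn : 1 ≤ n) (ρ : ℝ)
    (hρ : 1 / 2 ^ n ≤ ρ) (s₁ s₂ : ℝ)
    (hs₁ : s₁ ∈ Set.Ico (0 : ℝ) 1) (hs₂ : s₂ ∈ Set.Ico (0 : ℝ) 1)
    (hd : ρ ≤ circDist s₁ s₂) :
    ∃ i ∈ Finset.Icc 1 n, Xor' (dyadicActive i s₁) (dyadicActive i s₂) := by
  by_contra hcon
  push_neg at hcon
  have hagree : ∀ i, i + 1 ≤ n →
      (Int.fract (s₁ * 2 ^ i) < 1 / 2 ↔ Int.fract (s₂ * 2 ^ i) < 1 / 2) := by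
    intro i hi
    have := hcon (i + 1) (Finset.mem_Icc.mpr ⟨Nat.le_add_left 1 i, hi⟩)
    rw [← active_succ, ← active_succ]
    rcases Classical.em (dyadicActive (i+1) s₁) with h1 | h1 <;>
      rcases Classical.em (dyadicActive (i+1) s₂) with h2 | h2 <;>
      simp_all [Xor']
  have hkey : ∀ i, i ≤ n → ⌊s₁ * 2 ^ i⌋ = ⌊s₂ * 2 ^ i⌋ := by
    intro i
    induction i with
    | zero =>
      intro _
      simp only [pow_zero, mul_one]
      rw [Int.floor_eq_zero_iff.mpr (by simpa using hs₁),
        Int.floor_eq_zero_iff.mpr (by simpa using hs₂)]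
    | succ i ih =>
      intro hi
      have hih := ih (Nat.le_of_succ_le hi)
      have hag := hagree i hi
      have e1 : s₁ * 2 ^ (i + 1) = s₁ * 2 ^ i * 2 := by ring
      have e2 : s₂ * 2 ^ (i + 1) = s₂ * 2 ^ i * 2 := by ring
      rw [e1, e2]
      by_cases hf : Int.fract (s₁ * 2 ^ i) < 1 / 2
      · rw [floor_double_lt hf, floor_double_lt (hag.mp hf), hih]
      · rw [floor_double_ge hf, floor_double_ge (fun h => hf (hag.mpr h)), hih]
  have hk := hkey n le_rfl
  have hp : (0 : ℝ) < 2 ^ n := by positivity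
  have b1 : (⌊s₁ * 2 ^ n⌋ : ℝ) ≤ s₁ * 2 ^ n := Int.floor_le _
  have b2 : s₁ * 2 ^ n < ⌊s₁ * 2 ^ n⌋ + 1 := Int.lt_floor_add_one _
  have b3 : (⌊s₂ * 2 ^ n⌋ : ℝ) ≤ s₂ * 2 ^ n := Int.floor_le _
  have b4 : s₂ * 2 ^ n < ⌊s₂ * 2 ^ n⌋ + 1 := Int.lt_floor_add_one _
  rw [hk] at b1 b2
  have habs : |s₁ - s₂| < 1 / 2 ^ n := by
    rw [abs_lt]
    constructor
    · rw [neg_lt, neg_sub]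
      rw [lt_div_iff₀ hp]; nlinarith
    · rw [lt_div_iff₀ hp]; nlinarith
  have : circDist s₁ s₂ ≤ |s₁ - s₂| := min_le_left _ _
  linarith
end
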